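/- arXiv:1205.0797 — 2 statements merged into one kernel-verified Lean document; each statement's English description precedes it below -/
import Mathlib

section
/- The Lie algebra u_n of unitriangular polynomial derivations is solvable of derived length exactly n. -/
/-!
In the paper's 1-based indexing, `u_{n,i} = Σ_{j ≥ i} P_{j-1} ∂_j` satisfies
`⁅u_{n,i}, u_{n,i}⁆ ⊆ u_{n,i+1}`: a derivation in `u_{n,i}` kills `P_{i-1}`, so for `j ≤ i` both
terms of `⁅a, b⁆ x_j = a (b x_j) - b (a x_j)` vanish. As `u_{n,n+1} = 0`, the `n`-th derived term
of `u_n = u_{n,1}` is zero. Conversely `⁅∂_i, x_i ⋯ x_{j-1} ∂_j⁆ = x_{i+1} ⋯ x_{j-1} ∂_j` for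
`i < j`, so `x_i ⋯ x_{j-1} ∂_j` lies in the `(i-1)`-st derived term whenever `i ≤ j`; for
`i = j = n` this is `∂_n ≠ 0`.
-/

open MvPolynomial

noncomputable section

/-- The polynomial algebra `Pₙ = K[x₀,…,x_{n-1}]`. -/
abbrev Pn (K : Type) [Field K] (n : ℕ) : Type := MvPolynomial (Fin n) K

/-- The Lie algebra of `K`-derivations of `Pₙ`. -/
abbrev DerPn (K : Type) [Field K] (n : ℕ) : Type :=
  Derivation K (Pn K n) (Pn K n)

/-- The subalgebra `P_j = K[x₀,…,x_{j-1}]` of `Pₙ` (0-indexed: variables with index `< j`). -/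
def Psub (K : Type) [Field K] (n j : ℕ) : Subalgebra K (Pn K n) :=
  MvPolynomial.supported K {k : Fin n | (k : ℕ) < j}

/-- The subspace `u_{n,i} = Σ_{j=i}^n P_{j-1}∂_j` (1-indexed `i`; `U K n 1 = u_n`).
A derivation `D` lies in it iff `D(x_j) ∈ P_{j-1}` for all `j` and `D(x_j) = 0` for `j < i`
(0-indexed: `D (X j) = 0` when `(j:ℕ)+1 < i`). -/
def U (K : Type) [Field K] (n i : ℕ) : Submodule K (DerPn K n) where
  carrier := {D | ∀ j : Fin n, D (X j) ∈ Psub K n j ∧ ((j : ℕ) + 1 < i → D (X j) = 0)}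
  add_mem' := by
    intro a b ha hb j
    refine ⟨?_, fun h => ?_⟩
    · simpa using Subalgebra.add_mem _ (ha j).1 (hb j).1
    · simp [(ha j).2 h, (hb j).2 h]
  zero_mem' := by
    intro j
    refine ⟨by simpa using (Psub K n j).zero_mem, fun _ => rfl⟩
  smul_mem' := by
    intro c a ha j
    refine ⟨?_, fun h => ?_⟩
    · simpa using Subalgebra.smul_mem _ (ha j).1 c
    · simp [(ha j).2 h]

/-- The span of all brackets `⁅a,b⁆` with `a ∈ A`, `b ∈ B`. -/
def lieSpan (K : Type) [Field K] (n : ℕ) (A B : Submodule K (DerPn K n)) :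
    Submodule K (DerPn K n) :=
  Submodule.span K {x | ∃ a ∈ A, ∃ b ∈ B, x = ⁅a, b⁆}

/-- The derived series of a subspace `G`: `G_{(0)} = G`, `G_{(i+1)} = [G_{(i)}, G_{(i)}]`. -/
def derivedSub (K : Type) [Field K] (n : ℕ) (G : Submodule K (DerPn K n)) : ℕ → Submodule K (DerPn K n)
  | 0 => G
  | i + 1 => lieSpan K n (derivedSub K n G i) (derivedSub K n G i)
namespace MvPolynomial

variable {R σ : Type*}

theorem derivation_map_mem_supported [CommSemiring R]
    (D : Derivation R (MvPolynomial σ R) (MvPolynomial σ R)) {s : Set σ}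
    (hD : ∀ k ∈ s, D (X k) ∈ supported R s) {p : MvPolynomial σ R} (hp : p ∈ supported R s) :
    D p ∈ supported R s := by
  induction hp using Algebra.adjoin_induction with
  | mem _ hx =>
    obtain ⟨k, hk, rfl⟩ := hx
    exact hD k hk
  | algebraMap r => simp
  | add x y _ _ hx hy => simpa only [map_add] using add_mem hx hy
  | mul x y hx' hy' hx hy =>
    rw [Derivation.leibniz]
    exact add_mem (mul_mem hx' hy) (mul_mem hy' hx)

theorem derivation_eq_zero_of_mem_supported [CommSemiring R]
    {D : Derivation R (MvPolynomial σ R) (MvPolynomial σ R)} {s : Set σ}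
    (hD : ∀ k ∈ s, D (X k) = 0) {p : MvPolynomial σ R} (hp : p ∈ supported R s) : D p = 0 :=
  derivation_eqOn_supported (D₂ := 0) hD hp

theorem lie_pderiv_smul_pderiv [CommRing R] (i j : σ) (p : MvPolynomial σ R) :
    ⁅pderiv (R := R) i, p • pderiv (R := R) j⁆ = pderiv i p • pderiv j := by
  classical
  refine derivation_ext fun k => ?_
  rcases eq_or_ne k j with rfl | hkj
  · simp [Derivation.commutator_apply, Pi.single_apply, apply_ite]
  · simp [Derivation.commutator_apply, Pi.single_apply, apply_ite, hkj]

theorem pderiv_ne_zero [CommSemiring R] [Nontrivial R] (i : σ) : pderiv (R := R) i ≠ 0 :=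
  fun h => one_ne_zero (α := MvPolynomial σ R) (by simpa [h] using pderiv_X_self (R := R) i)

end MvPolynomial

variable {K : Type} [Field K] {n : ℕ}

theorem Psub_mono {j j' : ℕ} (h : j ≤ j') : Psub K n j ≤ Psub K n j' :=
  supported_mono fun _ hk => lt_of_lt_of_le hk h

theorem map_mem_Psub {D : DerPn K n} (hD : ∀ k : Fin n, D (X k) ∈ Psub K n k) {j : ℕ}
    {p : Pn K n} (hp : p ∈ Psub K n j) : D p ∈ Psub K n j :=
  derivation_map_mem_supported D (fun k hk => Psub_mono (le_of_lt hk) (hD k)) hp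

theorem map_eq_zero_of_mem_Psub {D : DerPn K n} {j : ℕ} (hD : ∀ k : Fin n, (k : ℕ) < j → D (X k) = 0)
    {p : Pn K n} (hp : p ∈ Psub K n j) : D p = 0 :=
  derivation_eq_zero_of_mem_supported hD hp

theorem lie_mem_lieSpan {A B : Submodule K (DerPn K n)} {a b : DerPn K n} (ha : a ∈ A) (hb : b ∈ B) :
    ⁅a, b⁆ ∈ lieSpan K n A B :=
  Submodule.subset_span ⟨a, ha, b, hb, rfl⟩

theorem lieSpan_le_U_succ {A : Submodule K (DerPn K n)} {i : ℕ} (hA : A ≤ U K n i) :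
    lieSpan K n A A ≤ U K n (i + 1) := by
  rw [lieSpan, Submodule.span_le]
  rintro _ ⟨a, ha, b, hb, rfl⟩ j
  have ha := hA ha
  have hb := hA hb
  rw [Derivation.commutator_apply]
  refine ⟨sub_mem (map_mem_Psub (fun k => (ha k).1) (hb j).1)
    (map_mem_Psub (fun k => (hb k).1) (ha j).1), fun hj => ?_⟩
  rw [map_eq_zero_of_mem_Psub (fun k hk => (ha k).2 (by omega)) (hb j).1,
    map_eq_zero_of_mem_Psub (fun k hk => (hb k).2 (by omega)) (ha j).1, sub_zero]

theorem derivedSub_U_one_le (i : ℕ) : derivedSub K n (U K n 1) i ≤ U K n (i + 1) := by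
  induction i with
  | zero => exact le_rfl
  | succ i ih => exact lieSpan_le_U_succ ih

theorem U_succ_eq_bot : U K n (n + 1) = ⊥ := by
  refine eq_bot_iff.2 fun D hD => ?_
  have : D = 0 := derivation_ext fun k => (hD k).2 (by omega)
  simp [this]

theorem derivedSub_U_one_eq_bot : derivedSub K n (U K n 1) n = ⊥ :=
  eq_bot_iff.2 ((derivedSub_U_one_le n).trans U_succ_eq_bot.le)

variable (K n) in
def prodX (i j : ℕ) : Pn K n :=
  ∏ k : Fin n with i ≤ k.val ∧ k.val < j, X k

theorem prodX_of_le {i j : ℕ} (h : j ≤ i) : prodX K n i j = 1 :=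
  Finset.prod_eq_one fun k hk => by simp only [Finset.mem_filter] at hk; omega

theorem prodX_mem_supported {i j : ℕ} {s : Set (Fin n)}
    (hs : ∀ k : Fin n, i ≤ (k : ℕ) → (k : ℕ) < j → k ∈ s) : prodX K n i j ∈ supported K s :=
  Subalgebra.prod_mem _ fun k hk => by
    simp only [Finset.mem_filter] at hk
    exact (X_mem_supported).2 (hs k hk.2.1 hk.2.2)

theorem prodX_eq_X_mul {i j : ℕ} (hij : i < j) (hi : i < n) :
    prodX K n i j = X ⟨i, hi⟩ * prodX K n (i + 1) j := by
  have hmem : (⟨i, hi⟩ : Fin n) ∈ Finset.univ.filter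
      (fun k : Fin n => i ≤ (k : ℕ) ∧ (k : ℕ) < j) := by simp [hij]
  rw [prodX, ← Finset.mul_prod_erase _ _ hmem, prodX]
  congr 2
  ext k
  simp only [Finset.mem_erase, Finset.mem_filter, Finset.mem_univ, true_and, ne_eq, Fin.ext_iff]
  omega

theorem pderiv_prodX {i j : ℕ} (hi : i < n) (hij : i < j) :
    pderiv ⟨i, hi⟩ (prodX K n i j) = prodX K n (i + 1) j := by
  have hrest : pderiv ⟨i, hi⟩ (prodX K n (i + 1) j) = 0 :=
    derivation_eq_zero_of_mem_supported (s := {k : Fin n | i + 1 ≤ k.val})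
      (fun k (hk : i + 1 ≤ k.val) => pderiv_X_of_ne fun h => by simp [h] at hk)
      (prodX_mem_supported fun _ hk _ => hk)
  rw [prodX_eq_X_mul hij hi, Derivation.leibniz, hrest, pderiv_X_self, smul_zero, zero_add,
    smul_eq_mul, mul_one]

theorem smul_pderiv_mem_U_one {j : Fin n} {p : Pn K n} (hp : p ∈ Psub K n j) :
    p • pderiv j ∈ U K n 1 := by
  classical
  intro k
  refine ⟨?_, fun h => by omega⟩
  by_cases hk : k = j
  · subst hk
    simpa using hp
  · simp [hk]

theorem prodX_smul_pderiv_mem_derivedSub (i : ℕ) (j : Fin n) (hij : i ≤ j) :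
    prodX K n i j • pderiv j ∈ derivedSub K n (U K n 1) i := by
  induction i generalizing j with
  | zero => exact smul_pderiv_mem_U_one (prodX_mem_supported fun _ _ hk => hk)
  | succ i ih =>
    have hi : i < n := by omega
    have hpderiv : pderiv ⟨i, hi⟩ ∈ derivedSub K n (U K n 1) i := by
      simpa only [prodX_of_le le_rfl, one_smul] using ih ⟨i, hi⟩ le_rfl
    have hbracket := lie_mem_lieSpan hpderiv (ih j (by omega))
    rwa [lie_pderiv_smul_pderiv, pderiv_prodX hi (by omega)] at hbracket

theorem derivedSub_U_one_pred_ne_bot (hn : 1 ≤ n) : derivedSub K n (U K n 1) (n - 1) ≠ ⊥ := by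
  have hmem := prodX_smul_pderiv_mem_derivedSub (K := K) (n - 1) (⟨n - 1, by omega⟩ : Fin n) le_rfl
  rw [prodX_of_le le_rfl, one_smul] at hmem
  exact fun hbot => pderiv_ne_zero _ ((Submodule.mem_bot K).1 (hbot ▸ hmem))

theorem un_solvable_length_n_general (K : Type) [Field K] (n : ℕ) (hn : 2 ≤ n) :
    derivedSub K n (U K n 1) n = ⊥ ∧ derivedSub K n (U K n 1) (n - 1) ≠ ⊥ :=
  ⟨derivedSub_U_one_eq_bot, derivedSub_U_one_pred_ne_bot (by omega)⟩

/-- `u_n` is solvable of derived length exactly `n`: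
the `n`-th term of its derived series vanishes but the `(n-1)`-st does not. -/
theorem un_solvable_length_n (K : Type) [Field K] [CharZero K] (n : ℕ) (hn : 2 ≤ n) :
    derivedSub K n (U K n 1) n = ⊥ ∧ derivedSub K n (U K n 1) (n - 1) ≠ ⊥ :=
  un_solvable_length_n_general K n hn
end
end

section
/- Let 1 ≤ k < i ≤ n, λ_k ∈ K*, u_k ∈ u_{n,k+1}, λᵢ ∈ P_k, uᵢ ∈ u_{n,i+1}. If [λ_k∂_k + u_k, λᵢ∂ᵢ + uᵢ] = 0 in u_n, then ∂_k(λᵢ) = 0, i.e., λᵢ ∈ P_{k-1}. -/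
open MvPolynomial

noncomputable section

namespace MvPolynomial

variable {R σ : Type*} [CommSemiring R]

theorem derivation_eq_zero_of_mem_supported_s10 {A : Type*} [AddCommMonoid A] [Module R A]
    [Module (MvPolynomial σ R) A] {D : Derivation R (MvPolynomial σ R) A} {s : Set σ}
    (h : ∀ i ∈ s, D (X i) = 0) {f : MvPolynomial σ R} (hf : f ∈ supported R s) : D f = 0 :=
  derivation_eqOn_supported (D₂ := 0) h hf

theorem notMem_vars_of_pderiv_eq_zero [NoZeroDivisors R] [CharZero R] {i : σ}
    {f : MvPolynomial σ R} (h : pderiv i f = 0) : i ∉ f.vars := by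
  classical
  intro hi
  obtain ⟨d, hd, hdi⟩ := (mem_vars_iff_mem_support i).1 hi
  have hle : Finsupp.single i 1 ≤ d :=
    Finsupp.single_le_iff.2 (Nat.one_le_iff_ne_zero.2 (Finsupp.mem_support_iff.1 hdi))
  have hcoeff := coeff_pderiv (i := i) f (d - Finsupp.single i 1)
  rw [h, tsub_add_cancel_of_le hle, coeff_zero, eq_comm] at hcoeff
  exact mul_ne_zero (mem_support_iff.1 hd) (Nat.cast_add_one_ne_zero _) hcoeff

theorem mem_supported_diff_singleton_of_pderiv_eq_zero [NoZeroDivisors R] [CharZero R]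
    {s : Set σ} {i : σ} {f : MvPolynomial σ R} (hf : f ∈ supported R s) (h : pderiv i f = 0) :
    f ∈ supported R (s \ {i}) := by
  rw [mem_supported] at hf ⊢
  exact fun j hj => ⟨hf hj, fun hji => notMem_vars_of_pderiv_eq_zero h (hji ▸ hj)⟩

end MvPolynomial

section

variable {K : Type} [Field K] {n : ℕ}

theorem Psub_mono_s10 : Monotone (Psub K n) := fun _ _ hjk =>
  supported_mono fun _ hx => lt_of_lt_of_le hx hjk

theorem pderiv_eq_zero_of_mem_Psub {j : Fin n} {p : Pn K n} (hp : p ∈ Psub K n j) :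
    pderiv j p = 0 :=
  derivation_eq_zero_of_mem_supported_s10 (fun _ hl => pderiv_X_of_ne (Fin.ne_of_lt hl)) hp

theorem mem_Psub_of_pderiv_eq_zero [CharZero K] {j : Fin n} {p : Pn K n}
    (hp : p ∈ Psub K n (j + 1)) (h : pderiv j p = 0) : p ∈ Psub K n j := by
  refine supported_mono (fun l hl => ?_) (mem_supported_diff_singleton_of_pderiv_eq_zero hp h)
  exact lt_of_le_of_ne (Nat.lt_succ_iff.1 hl.1) fun hlj => hl.2 (Fin.ext hlj)

theorem U.apply_eq_zero_of_mem_Psub {k : ℕ} {D : DerPn K n} (hD : D ∈ U K n (k + 1))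
    {p : Pn K n} (hp : p ∈ Psub K n k) : D p = 0 :=
  derivation_eq_zero_of_mem_supported_s10 (fun j hj => (hD j).2 (Nat.succ_lt_succ hj)) hp

end

theorem lambda_drops_general (K : Type) [Field K] [CharZero K] (n : ℕ)
    (k i : ℕ) (hk : 1 ≤ k) (hki : k < i)
    (idxk idxi : Fin n) (hidxk : (idxk : ℕ) = k - 1) (hidxi : (idxi : ℕ) = i - 1)
    (lamk : K) (hlamk : lamk ≠ 0)
    (uk : DerPn K n) (huk : uk ∈ U K n (k + 1))
    (li : Pn K n) (hli : li ∈ Psub K n k)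
    (ui : DerPn K n) (hui : ui ∈ U K n (i + 1))
    (hbr : ⁅lamk • pderiv idxk + uk, li • pderiv idxi + ui⁆ = (0 : DerPn K n)) :
    (pderiv idxk) li = 0 ∧ li ∈ Psub K n (k - 1) := by
  obtain rfl : k = idxk + 1 := by omega
  have hne : idxi ≠ idxk := fun h => by rw [h] at hidxi; omega
  have hD₂ : ∀ p ∈ Psub K n idxi, (li • pderiv idxi + ui : DerPn K n) p = 0 := fun p hp => by
    rw [Derivation.add_apply, Derivation.smul_apply, pderiv_eq_zero_of_mem_Psub hp,
      U.apply_eq_zero_of_mem_Psub hui (Psub_mono_s10 (by omega) hp), smul_zero, add_zero]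
  -- `uk` kills `li ∈ P_k`, and `li • ∂ᵢ + ui` kills `uk (xᵢ) ∈ P_{i-1}`.
  have hXi : (⁅lamk • pderiv idxk + uk, li • pderiv idxi + ui⁆ : DerPn K n) (X idxi) =
      lamk • pderiv idxk li := by
    have hui_Xi : ui (X idxi) = 0 := (hui idxi).2 (by omega)
    simp only [Derivation.commutator_apply, Derivation.add_apply, Derivation.smul_apply,
      pderiv_X_self, pderiv_X_of_ne hne, hui_Xi, smul_eq_mul, mul_one, add_zero, smul_zero,
      zero_add, U.apply_eq_zero_of_mem_Psub huk hli, hD₂ _ (huk idxi).1, sub_zero]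
  have hpd : pderiv idxk li = 0 :=
    (smul_eq_zero.1 (hXi ▸ congrArg (· (X idxi)) hbr)).resolve_left hlamk
  exact ⟨hpd, by simpa using mem_Psub_of_pderiv_eq_zero hli hpd⟩

/-- let `1 ≤ k < i ≤ n`, `λ_k ∈ K*`, `u_k ∈ u_{n,k+1}`, `λᵢ ∈ P_k`,
`uᵢ ∈ u_{n,i+1}`. If `[λ_k∂_k + u_k, λᵢ∂ᵢ + uᵢ] = 0` then `∂_k(λᵢ) = 0`, i.e. `λᵢ ∈ P_{k-1}`. -/
theorem lambda_drops (K : Type) [Field K] [CharZero K] (n : ℕ) (hn : 2 ≤ n)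
    (k i : ℕ) (hk : 1 ≤ k) (hki : k < i) (hin : i ≤ n)
    (idxk idxi : Fin n) (hidxk : (idxk : ℕ) = k - 1) (hidxi : (idxi : ℕ) = i - 1)
    (lamk : K) (hlamk : lamk ≠ 0)
    (uk : DerPn K n) (huk : uk ∈ U K n (k + 1))
    (li : Pn K n) (hli : li ∈ Psub K n k)
    (ui : DerPn K n) (hui : ui ∈ U K n (i + 1))
    (hbr : ⁅lamk • pderiv idxk + uk, li • pderiv idxi + ui⁆ = (0 : DerPn K n)) :
    (pderiv idxk) li = 0 ∧ li ∈ Psub K n (k - 1) :=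
  lambda_drops_general K n k i hk hki idxk idxi hidxk hidxi lamk hlamk uk huk li hli ui hui hbr
end
end
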